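/- Let r > 0, p ≥ 1, 0 < ε < r, m ∈ ℕ, let E = ℝ^m with the Euclidean inner product, K and E₁ finite-dimensional real inner product spaces, T : E → K and A : E → E₁ linear maps, g ∈ K, f, q ∈ E₁, u ∈ E, γ > 0, and let B = p(r−ε)^{p−1}/(2ε) + 3((r−ε)^p − r^p)/(4ε²). If ω > γ|B|, then the function v ↦ J_{ω,u}(v,q) := ‖Tv − g‖² + γ ∑_{i=1}^m W_r^{p,ε}(v_i) + ω‖v − u‖² + (1/2)‖Av − (f+q)‖² is ν-strongly convex with ν = 2(ω − γ|B|). -/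

import Mathlib

/-!
Let `B` be the coefficient in the statement; the tangent line inequality for `s ↦ s ^ p` at
`r - ε` makes it negative. As `‖v‖² = ∑ vᵢ²` and `|B| = -B`, subtracting `(ν/2)‖v‖²` from `J`
leaves `‖Tv - g‖² + γ ∑ (W(vᵢ) - B vᵢ²) + ω (‖v - u‖² - ‖v‖²) + ½ ‖Av - (f + q)‖²`, whose third
term is affine. It remains to see that `t ↦ W(t) - B t²` is convex. It equals `φ |t|`, where
`φ(s) = W(s) - B s²` on `[0, ∞)` is `C¹` on `(0, ∞)` with nonnegative, nondecreasing
derivative, and a convex nondecreasing function of `|t|` is convex.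
-/

/-- The smoothed truncated power potential `W_r^{p,ε}`. -/
noncomputable def Wpot (r p ε t : ℝ) : ℝ :=
  if |t| ≤ r - ε then |t| ^ p
  else if |t| ≤ r + ε then
    (p * (r - ε) ^ (p - 1) / (12 * ε ^ 2) +
        (p * (r - ε) ^ (p - 1) / (2 * ε) +
          3 * ((r - ε) ^ p - r ^ p) / (4 * ε ^ 2)) / (3 * ε)) *
      (|t| - (r + ε)) ^ 3 +
    (p * (r - ε) ^ (p - 1) / (2 * ε) + 3 * ((r - ε) ^ p - r ^ p) / (4 * ε ^ 2)) *
      (|t| - (r + ε)) ^ 2 + r ^ p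
  else r ^ p

open Set

theorem ConvexOn.sum {E ι : Type*} [AddCommMonoid E] [Module ℝ E] {s : Set E}
    (hs : Convex ℝ s) (t : Finset ι) {F : ι → E → ℝ} (hF : ∀ i ∈ t, ConvexOn ℝ s (F i)) :
    ConvexOn ℝ s (fun x => ∑ i ∈ t, F i x) := by
  classical
  induction t using Finset.induction_on with
  | empty => simpa using convexOn_const (0 : ℝ) hs
  | insert i t hi ih =>
    simp only [Finset.sum_insert hi]
    exact (hF i (t.mem_insert_self i)).add (ih fun j hj => hF j (Finset.mem_insert_of_mem hj))

theorem convexOn_norm_apply_sub_sq {E F : Type*} [AddCommGroup E] [Module ℝ E]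
    [SeminormedAddCommGroup F] [NormedSpace ℝ F] (L : E →ₗ[ℝ] F) (c : F) :
    ConvexOn ℝ univ (fun x => ‖L x - c‖ ^ 2) :=
  (convexOn_univ_norm.pow (fun _ _ => norm_nonneg _) 2).comp_affineMap
    (L.toAffineMap - AffineMap.const ℝ E c)

theorem ConvexOn.comp_norm {E : Type*} [SeminormedAddCommGroup E] [NormedSpace ℝ E]
    {g : ℝ → ℝ} (hg : ConvexOn ℝ (Ici 0) g) (hg_mono : MonotoneOn g (Ici 0)) :
    ConvexOn ℝ univ (fun x : E => g ‖x‖) := by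
  refine ⟨convex_univ, fun x _ y _ a b ha hb hab => ?_⟩
  calc g ‖a • x + b • y‖ ≤ g (a * ‖x‖ + b * ‖y‖) :=
        hg_mono (norm_nonneg _) (mem_Ici.2 (by positivity)) (by
          simpa [norm_smul, abs_of_nonneg ha, abs_of_nonneg hb] using
            norm_add_le (a • x) (b • y))
    _ ≤ a • g ‖x‖ + b • g ‖y‖ := hg.2 (norm_nonneg x) (norm_nonneg y) ha hb hab

theorem convexOn_mul_norm_sub_sq_sub_norm_sq {E : Type*} [NormedAddCommGroup E]
    [InnerProductSpace ℝ E] (c : ℝ) (u : E) :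
    ConvexOn ℝ univ (fun v : E => c * (‖v - u‖ ^ 2 - ‖v‖ ^ 2)) := by
  refine ((((-2 * c) • innerₛₗ ℝ u).convexOn convex_univ).add_const (c * ‖u‖ ^ 2)).congr
    fun v _ => ?_
  simp only [Pi.add_apply, LinearMap.smul_apply, innerₛₗ_apply_apply, smul_eq_mul,
    norm_sub_sq_real, real_inner_comm u v]
  ring

theorem HasDerivAt.ite_le {f g : ℝ → ℝ} {a x f' g' : ℝ} (hf : HasDerivAt f f' x)
    (hg : HasDerivAt g g' x) (hfg : f a = g a) (hfg' : x = a → f' = g') :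
    HasDerivAt (fun y => if y ≤ a then f y else g y) (if x ≤ a then f' else g') x := by
  rcases lt_trichotomy x a with hxa | rfl | hxa
  · rw [if_pos hxa.le]
    exact hf.congr_of_eventuallyEq <| by
      filter_upwards [Iio_mem_nhds hxa] with y hy using if_pos hy.le
  · rw [if_pos le_rfl]
    have hleft : HasDerivWithinAt (fun y => if y ≤ x then f y else g y) f' (Iic x) x :=
      hf.hasDerivWithinAt.congr (fun y hy => if_pos hy) (if_pos le_rfl)
    have hright : HasDerivWithinAt (fun y => if y ≤ x then f y else g y) f' (Ici x) x := by
      rw [hfg' rfl]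
      refine hg.hasDerivWithinAt.congr (fun y hy => ?_) (by rw [if_pos le_rfl, hfg])
      split_ifs with h
      · rw [le_antisymm h hy, hfg]
      · rfl
    simpa [Iic_union_Ici] using hleft.union hright
  · rw [if_neg hxa.not_ge]
    exact hg.congr_of_eventuallyEq <| by
      filter_upwards [Ioi_mem_nhds hxa] with y hy using if_neg hy.not_ge

theorem Real.rpow_add_mul_rpow_sub_one_mul_le {x y p : ℝ} (hx : 0 < x) (hy : 0 ≤ y)
    (hp : 1 ≤ p) : x ^ p + p * x ^ (p - 1) * (y - x) ≤ y ^ p := by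
  have hbern := one_add_mul_self_le_rpow_one_add
    (by rw [le_div_iff₀ hx]; linarith : -1 ≤ (y - x) / x) hp
  have hyx : 1 + (y - x) / x = y / x := by field_simp; ring
  rw [hyx, Real.div_rpow hy hx.le, le_div_iff₀ (by positivity)] at hbern
  calc x ^ p + p * x ^ (p - 1) * (y - x) = (1 + p * ((y - x) / x)) * x ^ p := by
        rw [Real.rpow_sub_one hx.ne']; field_simp
    _ ≤ y ^ p := hbern

namespace Wpot

variable {r p ε : ℝ}

noncomputable def coeffB (r p ε : ℝ) : ℝ :=
  p * (r - ε) ^ (p - 1) / (2 * ε) + 3 * ((r - ε) ^ p - r ^ p) / (4 * ε ^ 2)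

noncomputable def coeffA (r p ε : ℝ) : ℝ :=
  p * (r - ε) ^ (p - 1) / (12 * ε ^ 2) + coeffB r p ε / (3 * ε)

noncomputable def profile (r p ε s : ℝ) : ℝ :=
  if s ≤ r - ε then s ^ p
  else if s ≤ r + ε then
    coeffA r p ε * (s - (r + ε)) ^ 3 + coeffB r p ε * (s - (r + ε)) ^ 2 + r ^ p
  else r ^ p

noncomputable def profileDeriv (r p ε s : ℝ) : ℝ :=
  if s ≤ r - ε then p * s ^ (p - 1)
  else if s ≤ r + ε then
    3 * coeffA r p ε * (s - (r + ε)) ^ 2 + 2 * coeffB r p ε * (s - (r + ε))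
  else 0

theorem eq_profile_abs (t : ℝ) : Wpot r p ε t = profile r p ε |t| := rfl

theorem coeffA_mul (hε : ε ≠ 0) :
    12 * ε ^ 2 * coeffA r p ε = p * (r - ε) ^ (p - 1) + 4 * ε * coeffB r p ε := by
  unfold coeffA; field_simp; ring

theorem coeffB_mul (hε : ε ≠ 0) :
    4 * ε ^ 2 * coeffB r p ε = 2 * ε * (p * (r - ε) ^ (p - 1)) + 3 * ((r - ε) ^ p - r ^ p) := by
  unfold coeffB; field_simp; ring

theorem mul_rpow_sub_one_pos (hp : 1 ≤ p) (hεr : ε < r) : 0 < p * (r - ε) ^ (p - 1) :=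
  mul_pos (by linarith) (Real.rpow_pos_of_pos (by linarith) _)

theorem mul_rpow_sub_one_add_four_mul_coeffB_nonpos (hp : 1 ≤ p) (hε : 0 < ε) (hεr : ε < r) :
    p * (r - ε) ^ (p - 1) + 4 * ε * coeffB r p ε ≤ 0 := by
  have htangent := Real.rpow_add_mul_rpow_sub_one_mul_le (x := r - ε) (y := r)
    (by linarith) (by linarith) hp
  have hB := coeffB_mul (r := r) (p := p) hε.ne'
  nlinarith

theorem coeffB_neg (hp : 1 ≤ p) (hε : 0 < ε) (hεr : ε < r) : coeffB r p ε < 0 := by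
  nlinarith [mul_rpow_sub_one_add_four_mul_coeffB_nonpos hp hε hεr, mul_rpow_sub_one_pos hp hεr]

theorem coeffA_nonpos (hp : 1 ≤ p) (hε : 0 < ε) (hεr : ε < r) : coeffA r p ε ≤ 0 := by
  nlinarith [mul_rpow_sub_one_add_four_mul_coeffB_nonpos hp hε hεr,
    coeffA_mul (r := r) (p := p) hε.ne', pow_pos hε 2]

theorem hasDerivAt_profile (hε : 0 < ε) {s : ℝ} (hs : 0 < s) :
    HasDerivAt (profile r p ε) (profileDeriv r p ε s) s := by
  have hcubic : HasDerivAt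
      (fun y => coeffA r p ε * (y - (r + ε)) ^ 3 + coeffB r p ε * (y - (r + ε)) ^ 2 + r ^ p)
      (3 * coeffA r p ε * (s - (r + ε)) ^ 2 + 2 * coeffB r p ε * (s - (r + ε))) s := by
    have h := (hasDerivAt_id' s).sub_const (r + ε)
    refine ((((h.fun_pow 3).const_mul (coeffA r p ε)).fun_add
      ((h.fun_pow 2).const_mul (coeffB r p ε))).add_const (r ^ p)).congr_deriv ?_
    push_cast; ring
  have hinner := hcubic.ite_le (hasDerivAt_const s (r ^ p)) (a := r + ε) (by ring)
    (fun h => by subst h; ring)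
  -- The coefficients are chosen so that `π_p` agrees with `s ^ p` to first order at `r - ε`.
  refine (Real.hasDerivAt_rpow_const (Or.inl hs.ne')).ite_le hinner ?_ ?_
  · rw [if_pos (by linarith)]
    linear_combination (2 * ε / 3) * coeffA_mul (r := r) (p := p) hε.ne'
      - (1 / 3) * coeffB_mul (r := r) (p := p) hε.ne'
  · intro h
    rw [h, if_pos (by linarith)]
    linear_combination (-1) * coeffA_mul (r := r) (p := p) hε.ne'

theorem continuousOn_profile (hp : 1 ≤ p) (hε : 0 < ε) (hεr : ε < r) :
    ContinuousOn (profile r p ε) (Ici 0) := by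
  refine continuousOn_of_forall_continuousAt fun s hs => ?_
  rcases (mem_Ici.1 hs).eq_or_lt with rfl | hs
  · refine (Real.continuousAt_rpow_const 0 p (Or.inr (by linarith))).congr ?_
    filter_upwards [Iio_mem_nhds (by linarith : (0 : ℝ) < r - ε)] with y hy
    exact (if_pos hy.le).symm
  · exact (hasDerivAt_profile hε hs).continuousAt

theorem monotoneOn_profileDeriv_sub (hp : 1 ≤ p) (hε : 0 < ε) (hεr : ε < r) :
    MonotoneOn (fun s => profileDeriv r p ε s - 2 * coeffB r p ε * s) (Ioi 0) := by
  have hB := coeffB_neg hp hε hεr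
  have hA := coeffA_nonpos hp hε hεr
  have hP := mul_rpow_sub_one_add_four_mul_coeffB_nonpos hp hε hεr
  have hAid := coeffA_mul (r := r) (p := p) hε.ne'
  have hrpow : ∀ x y : ℝ, 0 < x → x ≤ y → p * x ^ (p - 1) ≤ p * y ^ (p - 1) := fun x y hx hxy =>
    mul_le_mul_of_nonneg_left (Real.rpow_le_rpow hx.le hxy (by linarith)) (by linarith)
  intro a ha b hb hab
  simp only [mem_Ioi] at ha hb
  simp only [profileDeriv]
  split_ifs with h1 h2 h3 h4 h5 h6 h7 h8
  · nlinarith [hrpow a b ha hab]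
  · have hsq : (b - (r + ε)) ^ 2 ≤ (2 * ε) ^ 2 := by nlinarith
    nlinarith [hrpow a (r - ε) ha h1, mul_le_mul_of_nonpos_left hsq hA]
  · nlinarith [hrpow a (r - ε) ha h1]
  · linarith
  · nlinarith [mul_nonneg (sub_nonneg.mpr hab) (by nlinarith : 0 ≤ 2 * (r + ε) - a - b)]
  · nlinarith [mul_nonpos_of_nonpos_of_nonneg hA (sq_nonneg (a - (r + ε)))]
  · linarith
  · linarith
  · nlinarith

theorem hasDerivAt_profile_sub (hε : 0 < ε) {s : ℝ} (hs : 0 < s) :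
    HasDerivAt (fun s => profile r p ε s - coeffB r p ε * s ^ 2)
      (profileDeriv r p ε s - 2 * coeffB r p ε * s) s :=
  ((hasDerivAt_profile hε hs).sub ((hasDerivAt_pow 2 s).const_mul _)).congr_deriv
    (by push_cast; ring)

theorem profileDeriv_sub_nonneg (hp : 1 ≤ p) (hε : 0 < ε) (hεr : ε < r) {s : ℝ} (hs : 0 < s) :
    0 ≤ profileDeriv r p ε s - 2 * coeffB r p ε * s := by
  have hB := coeffB_neg hp hε hεr
  have hP := mul_rpow_sub_one_add_four_mul_coeffB_nonpos hp hε hεr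
  have hAid := coeffA_mul (r := r) (p := p) hε.ne'
  simp only [profileDeriv]
  split_ifs with h1 h2
  · nlinarith [Real.rpow_nonneg hs.le (p - 1)]
  · have hsq : (s - (r + ε)) ^ 2 ≤ (2 * ε) ^ 2 := by nlinarith
    nlinarith [mul_le_mul_of_nonpos_left hsq (coeffA_nonpos hp hε hεr),
      mul_rpow_sub_one_pos hp hεr]
  · nlinarith

theorem convexOn_profile_sub (hp : 1 ≤ p) (hε : 0 < ε) (hεr : ε < r) :
    ConvexOn ℝ (Ici 0) (fun s => profile r p ε s - coeffB r p ε * s ^ 2) := by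
  refine MonotoneOn.convexOn_of_deriv (convex_Ici 0)
    ((continuousOn_profile hp hε hεr).sub (by fun_prop)) ?_ ?_ <;> rw [interior_Ici]
  · exact fun s hs => (hasDerivAt_profile_sub hε hs).differentiableAt.differentiableWithinAt
  · refine (monotoneOn_profileDeriv_sub hp hε hεr).congr fun s hs => ?_
    exact (hasDerivAt_profile_sub hε hs).deriv.symm

theorem monotoneOn_profile_sub (hp : 1 ≤ p) (hε : 0 < ε) (hεr : ε < r) :
    MonotoneOn (fun s => profile r p ε s - coeffB r p ε * s ^ 2) (Ici 0) := by
  refine monotoneOn_of_deriv_nonneg (convex_Ici 0)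
    ((continuousOn_profile hp hε hεr).sub (by fun_prop)) ?_ ?_ <;> rw [interior_Ici]
  · exact fun s hs => (hasDerivAt_profile_sub hε hs).differentiableAt.differentiableWithinAt
  · intro s hs
    rw [(hasDerivAt_profile_sub hε hs).deriv]
    exact profileDeriv_sub_nonneg hp hε hεr hs

theorem convexOn_sub_coeffB_mul_sq (hp : 1 ≤ p) (hε : 0 < ε) (hεr : ε < r) :
    ConvexOn ℝ univ (fun t => Wpot r p ε t - coeffB r p ε * t ^ 2) :=
  ((convexOn_profile_sub hp hε hεr).comp_norm (monotoneOn_profile_sub hp hε hεr)).congr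
    fun t _ => by simp only [Real.norm_eq_abs, sq_abs, eq_profile_abs]

end Wpot

theorem statement13_general (r p ε : ℝ) (hp : 1 ≤ p) (hε0 : 0 < ε) (hεr : ε < r)
    (m : ℕ) {K E₁ : Type*}
    [NormedAddCommGroup K] [InnerProductSpace ℝ K]
    [NormedAddCommGroup E₁] [InnerProductSpace ℝ E₁]
    (T : EuclideanSpace ℝ (Fin m) →ₗ[ℝ] K) (A : EuclideanSpace ℝ (Fin m) →ₗ[ℝ] E₁)
    (g : K) (f q : E₁) (u : EuclideanSpace ℝ (Fin m)) (γ ω : ℝ) (hγ : 0 < γ) :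
    ConvexOn ℝ Set.univ (fun v : EuclideanSpace ℝ (Fin m) =>
      (‖T v - g‖ ^ 2 + γ * ∑ i, Wpot r p ε (v i) + ω * ‖v - u‖ ^ 2 +
          1 / 2 * ‖A v - (f + q)‖ ^ 2) -
        2 * (ω - γ * |p * (r - ε) ^ (p - 1) / (2 * ε) +
            3 * ((r - ε) ^ p - r ^ p) / (4 * ε ^ 2)|) / 2 * ‖v‖ ^ 2) := by
  have hB : |p * (r - ε) ^ (p - 1) / (2 * ε) + 3 * ((r - ε) ^ p - r ^ p) / (4 * ε ^ 2)|
      = -Wpot.coeffB r p ε := abs_of_neg (Wpot.coeffB_neg hp hε0 hεr)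
  have hW : ConvexOn ℝ univ fun v : EuclideanSpace ℝ (Fin m) =>
      γ * ∑ i, (Wpot r p ε (v i) - Wpot.coeffB r p ε * v i ^ 2) :=
    (ConvexOn.sum convex_univ _ fun i _ =>
      (Wpot.convexOn_sub_coeffB_mul_sq hp hε0 hεr).comp_linearMap
        (EuclideanSpace.projₗ i)).smul hγ.le
  have hA := (convexOn_norm_apply_sub_sq A (f + q)).smul (by norm_num : (0 : ℝ) ≤ 1 / 2)
  refine ((((convexOn_norm_apply_sub_sq T g).add hW).add
    (convexOn_mul_norm_sub_sq_sub_norm_sq ω u)).add hA).congr fun v _ => ?_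
  simp only [Pi.add_apply, smul_eq_mul, hB, Finset.sum_sub_distrib,
    ← Finset.mul_sum, ← EuclideanSpace.real_norm_sq_eq]
  ring

/-- If `ω > γ|B|` (with `B` as in the smoothing construction), then
`v ↦ J_{ω,u}(v,q) = ‖Tv − g‖² + γ ∑ᵢ W_r^{p,ε}(vᵢ) + ω‖v − u‖² + ½‖Av − (f+q)‖²`
is `ν`-strongly convex with `ν = 2(ω − γ|B|)`, i.e. subtracting `(ν/2)‖v‖²` leaves a
convex function. -/
theorem statement13 (r p ε : ℝ) (hr : 0 < r) (hp : 1 ≤ p) (hε0 : 0 < ε) (hεr : ε < r)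
    (m : ℕ) {K E₁ : Type*}
    [NormedAddCommGroup K] [InnerProductSpace ℝ K] [FiniteDimensional ℝ K]
    [NormedAddCommGroup E₁] [InnerProductSpace ℝ E₁] [FiniteDimensional ℝ E₁]
    (T : EuclideanSpace ℝ (Fin m) →ₗ[ℝ] K) (A : EuclideanSpace ℝ (Fin m) →ₗ[ℝ] E₁)
    (g : K) (f q : E₁) (u : EuclideanSpace ℝ (Fin m)) (γ ω : ℝ) (hγ : 0 < γ)
    (hω : γ * |p * (r - ε) ^ (p - 1) / (2 * ε) +
        3 * ((r - ε) ^ p - r ^ p) / (4 * ε ^ 2)| < ω) :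
    ConvexOn ℝ Set.univ (fun v : EuclideanSpace ℝ (Fin m) =>
      (‖T v - g‖ ^ 2 + γ * ∑ i, Wpot r p ε (v i) + ω * ‖v - u‖ ^ 2 +
          1 / 2 * ‖A v - (f + q)‖ ^ 2) -
        2 * (ω - γ * |p * (r - ε) ^ (p - 1) / (2 * ε) +
            3 * ((r - ε) ^ p - r ^ p) / (4 * ε ^ 2)|) / 2 * ‖v‖ ^ 2) :=
  statement13_general r p ε hp hε0 hεr m T A g f q u γ ω hγ
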